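/- arXiv:2204.01559 — 5 statements merged into one kernel-verified Lean document; each statement's English description precedes it below -/
import Mathlib

section
/- For any z, w in the open Euclidean unit ball of ℂ^d, the series ∑_{α ∈ ℕ^d} (|α|!/α!) z^α · conj(w)^α converges absolutely and equals 1/(1 − ⟨z,w⟩), where ⟨z,w⟩ = ∑_i z_i conj(w_i). -/
open scoped ComplexConjugate

set_option maxHeartbeats 1000000
open Finset in
/-- Equivalence between `Fin d → ℕ` and the sigma type of `piAntidiag` fibers. -/
def sigmaAntidiagEquiv (d : ℕ) :
    (Σ n : ℕ, ↥(piAntidiag (univ : Finset (Fin d)) n)) ≃ (Fin d → ℕ) where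
  toFun x := x.2.1
  invFun α := ⟨∑ i, α i, ⟨α, by simp⟩⟩
  left_inv := by
    rintro ⟨n, α, hα⟩
    have h : univ.sum α = n := (mem_piAntidiag.mp hα).1
    subst h
    rfl
  right_inv α := rfl

open Finset in
theorem key_lemma (d : ℕ) (x : Fin d → ℂ) (hr : ∑ i, ‖x i‖ < 1) :
    Summable (fun α : Fin d → ℕ =>
      ‖(Nat.multinomial Finset.univ α : ℂ) * ∏ i, x i ^ α i‖) ∧
    HasSum (fun α : Fin d → ℕ =>
      (Nat.multinomial Finset.univ α : ℂ) * ∏ i, x i ^ α i)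
      (1 / (1 - ∑ i, x i)) := by
  set f : (Fin d → ℕ) → ℂ := fun α => (Nat.multinomial Finset.univ α : ℂ) * ∏ i, x i ^ α i
    with hf
  have hnorm : ∀ α : Fin d → ℕ,
      ‖f α‖ = (Nat.multinomial Finset.univ α : ℝ) * ∏ i, ‖x i‖ ^ α i := by
    intro α
    simp [hf, norm_prod]
  set e := sigmaAntidiagEquiv d
  -- fiberwise sums
  have hfiber : ∀ n : ℕ, ∑ α ∈ piAntidiag (univ : Finset (Fin d)) n,
      (Nat.multinomial Finset.univ α : ℝ) * ∏ i, ‖x i‖ ^ α i = (∑ i, ‖x i‖) ^ n := by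
    intro n
    rw [Finset.sum_pow_eq_sum_piAntidiag]
  have hr0 : 0 ≤ ∑ i, ‖x i‖ := Finset.sum_nonneg fun i _ => norm_nonneg _
  -- summability of norms
  have hsum : Summable (fun α : Fin d → ℕ => ‖f α‖) := by
    rw [← (Equiv.summable_iff e)]
    apply (summable_sigma_of_nonneg (fun _ => norm_nonneg _)).2
    constructor
    · intro n; exact Summable.of_finite
    · have : ∀ n : ℕ, ∑' (j : ↥(piAntidiag (univ : Finset (Fin d)) n)),
          ‖f (e ⟨n, j⟩)‖ = (∑ i, ‖x i‖) ^ n := by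
        intro n
        rw [tsum_fintype, ← hfiber n, ← Finset.sum_attach _
          (fun α => (Nat.multinomial Finset.univ α : ℝ) * ∏ i, ‖x i‖ ^ α i)]
        refine Finset.sum_congr rfl fun j _ => ?_
        rw [hnorm]
        rfl
      simp only [this]
      exact summable_geometric_of_lt_one hr0 hr
  refine ⟨hsum, ?_⟩
  have hsumf : Summable f := hsum.of_norm
  have hs1 : ‖∑ i, x i‖ < 1 := lt_of_le_of_lt (norm_sum_le _ _) hr
  have hse := (Equiv.summable_iff e).2 hsumf
  have htsum : ∑' α, f α = 1 / (1 - ∑ i, x i) := by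
    rw [← (Equiv.tsum_eq e f)]
    rw [show (∑' c, f (e c)) = ∑' (p : (Σ n : ℕ, ↥(piAntidiag (univ : Finset (Fin d)) n))),
      (f ∘ ⇑e) p from rfl]
    rw [Summable.tsum_sigma hse]
    have key : ∀ n : ℕ, ∑' (j : ↥(piAntidiag (univ : Finset (Fin d)) n)),
        (f ∘ ⇑e) ⟨n, j⟩ = (∑ i, x i) ^ n := by
      intro n
      rw [tsum_fintype, Finset.sum_pow_eq_sum_piAntidiag, ← Finset.sum_attach _
        (fun α => (Nat.multinomial Finset.univ α : ℂ) * ∏ i, x i ^ α i)]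
      rfl
    simp only [key]
    rw [tsum_geometric_of_norm_lt_one hs1, one_div]
  rw [← htsum]
  exact hsumf.hasSum
/-- For `z, w` in the open unit ball of `ℂ^d`, the series
`∑_α (|α|!/α!) z^α conj(w)^α` converges absolutely to `1/(1 - ⟨z,w⟩)`. -/
theorem stmt_1 (d : ℕ) (z w : EuclideanSpace ℂ (Fin d)) (hz : ‖z‖ < 1) (hw : ‖w‖ < 1) :
    Summable (fun α : Fin d → ℕ =>
      ‖(Nat.multinomial Finset.univ α : ℂ) * (∏ i, z i ^ α i) * ∏ i, conj (w i) ^ α i‖) ∧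
    HasSum (fun α : Fin d → ℕ =>
      (Nat.multinomial Finset.univ α : ℂ) * (∏ i, z i ^ α i) * ∏ i, conj (w i) ^ α i)
      (1 / (1 - ∑ i, z i * conj (w i))) := by
  set x : Fin d → ℂ := fun i => z i * conj (w i) with hx
  have hterm : ∀ α : Fin d → ℕ,
      (Nat.multinomial Finset.univ α : ℂ) * (∏ i, z i ^ α i) * ∏ i, conj (w i) ^ α i
      = (Nat.multinomial Finset.univ α : ℂ) * ∏ i, x i ^ α i := by
    intro α
    rw [mul_assoc, ← Finset.prod_mul_distrib]
    simp [hx, mul_pow]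
  have hr : ∑ i, ‖x i‖ < 1 := by
    have h1 : ∑ i, ‖x i‖ = ∑ i, ‖z i‖ * ‖w i‖ := by
      simp [hx]
    have h2 : ∑ i, ‖z i‖ * ‖w i‖ ≤
        Real.sqrt (∑ i, ‖z i‖ ^ 2) * Real.sqrt (∑ i, ‖w i‖ ^ 2) :=
      Real.sum_mul_le_sqrt_mul_sqrt _ _ _
    have hze : Real.sqrt (∑ i, ‖z i‖ ^ 2) = ‖z‖ := (EuclideanSpace.norm_eq z).symm
    have hwe : Real.sqrt (∑ i, ‖w i‖ ^ 2) = ‖w‖ := (EuclideanSpace.norm_eq w).symm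
    rw [h1]
    calc ∑ i, ‖z i‖ * ‖w i‖ ≤ ‖z‖ * ‖w‖ := by rw [← hze, ← hwe]; exact h2
      _ < 1 := by
        have h0z : 0 ≤ ‖z‖ := norm_nonneg _
        have h0w : 0 ≤ ‖w‖ := norm_nonneg _
        nlinarith
  obtain ⟨h1, h2⟩ := key_lemma d x hr
  constructor
  · refine h1.congr fun α => ?_
    rw [hterm]
  · refine (h2.congr_fun fun α => ?_)
    rw [hterm]
end

section
/- If (a_α)_{α ∈ ℕ^d} is a family of complex numbers with ∑_α |a_α|² · α!/|α|! < ∞, then for every w in the open unit ball of ℂ^d, ∑_α |a_α w^α| ≤ (1 − ‖w‖²)^{−1/2} · (∑_α |a_α|² α!/|α|!)^{1/2}; in particular the power series converges absolutely at w. -/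
/-- If `∑_α |a_α|² α!/|α|! < ∞`, then for `w` in the open unit ball of `ℂ^d` the power series
converges absolutely at `w`, with `∑_α |a_α w^α| ≤ (1-‖w‖²)^{-1/2} (∑_α |a_α|² α!/|α|!)^{1/2}`. -/
theorem stmt_2 (d : ℕ) (a : (Fin d → ℕ) → ℂ)
    (ha : Summable (fun α : Fin d → ℕ =>
      ‖a α‖ ^ 2 * ((∏ i, ((α i).factorial : ℝ)) / ((∑ i, α i).factorial : ℝ))))
    (w : EuclideanSpace ℂ (Fin d)) (hw : ‖w‖ < 1) :
    Summable (fun α : Fin d → ℕ => ‖a α * ∏ i, w i ^ α i‖) ∧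
    ∑' α : Fin d → ℕ, ‖a α * ∏ i, w i ^ α i‖ ≤
      Real.sqrt (∑' α : Fin d → ℕ,
          ‖a α‖ ^ 2 * ((∏ i, ((α i).factorial : ℝ)) / ((∑ i, α i).factorial : ℝ))) /
        Real.sqrt (1 - ‖w‖ ^ 2) := by
  classical
  set c : (Fin d → ℕ) → ℝ := fun α => ((∏ i, ((α i).factorial : ℝ)) / ((∑ i, α i).factorial : ℝ))
    with hc
  have hcpos : ∀ α, 0 < c α := by
    intro α
    exact div_pos (Finset.prod_pos fun i _ => by positivity) (by positivity)
  set f : (Fin d → ℕ) → ℝ := fun α => ‖a α‖ * Real.sqrt (c α) with hf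
  set g : (Fin d → ℕ) → ℝ := fun α => (∏ i, ‖w i‖ ^ α i) / Real.sqrt (c α) with hg
  have hfg : ∀ α, ‖a α * ∏ i, w i ^ α i‖ = f α * g α := by
    intro α
    have hs : Real.sqrt (c α) ≠ 0 := by positivity
    rw [norm_mul, norm_prod]
    simp only [hf, hg, norm_pow]
    field_simp
  have hgnn : ∀ α, 0 ≤ g α := fun α => by positivity
  have hfnn : ∀ α, 0 ≤ f α := fun α => by positivity
  have hf2 : ∀ α, f α ^ 2 = ‖a α‖ ^ 2 * c α := by
    intro α
    rw [hf, mul_pow, Real.sq_sqrt (hcpos α).le]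
  have hg2 : ∀ α, g α ^ 2 = (Nat.multinomial Finset.univ α : ℝ) * ∏ i, (‖w i‖ ^ 2) ^ α i := by
    intro α
    have hm : ((∏ i, ((α i).factorial : ℝ))) * (Nat.multinomial Finset.univ α : ℝ)
        = ((∑ i, α i).factorial : ℝ) := by
      rw [← Nat.cast_prod, ← Nat.cast_mul, Nat.multinomial_spec]
    have h1 : (0:ℝ) < ∏ i, ((α i).factorial : ℝ) := Finset.prod_pos fun i _ => by positivity
    have h2 : (0:ℝ) < ((∑ i, α i).factorial : ℝ) := by positivity
    have hP : (∏ i, ‖w i‖ ^ α i) ^ 2 = ∏ i, (‖w i‖ ^ 2) ^ (α i) := by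
      rw [← Finset.prod_pow]
      exact Finset.prod_congr rfl fun i _ => by ring
    rw [hg, div_pow, Real.sq_sqrt (hcpos α).le, hc, div_div_eq_mul_div, ← hm, hP]
    field_simp
  
  have hB : ‖w‖ ^ 2 = ∑ i, ‖w i‖ ^ 2 := by
    rw [EuclideanSpace.norm_eq, Real.sq_sqrt (by positivity)]
  have hB1 : ∑ i, ‖w i‖ ^ 2 < 1 := by
    rw [← hB]; exact pow_lt_one₀ (norm_nonneg w) hw two_ne_zero
  have hBnn : (0:ℝ) ≤ ∑ i, ‖w i‖ ^ 2 := by positivity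
  have hgsum : ∀ s : Finset (Fin d → ℕ), ∑ α ∈ s, g α ^ 2 ≤ (1 - ‖w‖ ^ 2)⁻¹ := by
    intro s
    set N := s.sup (fun α => ∑ i, α i) with hN
    have hsub : s ⊆ (Finset.range (N + 1)).biUnion
        (fun n => Finset.piAntidiag Finset.univ n) := by
      intro α hα
      simp only [Finset.mem_biUnion, Finset.mem_range, Finset.mem_piAntidiag]
      exact ⟨∑ i, α i, Nat.lt_succ_of_le (Finset.le_sup hα), rfl, fun i _ => Finset.mem_univ i⟩
    calc ∑ α ∈ s, g α ^ 2
        ≤ ∑ α ∈ (Finset.range (N + 1)).biUnion (fun n => Finset.piAntidiag Finset.univ n),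
            g α ^ 2 :=
          Finset.sum_le_sum_of_subset_of_nonneg hsub (fun α _ _ => sq_nonneg _)
      _ = ∑ n ∈ Finset.range (N + 1), ∑ α ∈ Finset.piAntidiag Finset.univ n, g α ^ 2 := by
          refine Finset.sum_biUnion ?_
          intro x _ y _ hxy
          simp only [Function.onFun]
          rw [Finset.disjoint_left]
          rintro α hαx hαy
          rw [Finset.mem_piAntidiag] at hαx hαy
          exact hxy (hαx.1.symm.trans hαy.1)
      _ = ∑ n ∈ Finset.range (N + 1), (∑ i, ‖w i‖ ^ 2) ^ n := by
          refine Finset.sum_congr rfl fun n _ => ?_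
          rw [Finset.sum_pow_eq_sum_piAntidiag]
          exact Finset.sum_congr rfl fun α _ => hg2 α
      _ ≤ ∑' n : ℕ, (∑ i, ‖w i‖ ^ 2) ^ n :=
          Summable.sum_le_tsum _ (fun n _ => by positivity)
            (summable_geometric_of_lt_one hBnn hB1)
      _ = (1 - ‖w‖ ^ 2)⁻¹ := by rw [tsum_geometric_of_lt_one hBnn hB1, hB]
  have hAnn : (0:ℝ) ≤ ∑' α, ‖a α‖ ^ 2 * c α := tsum_nonneg fun α => by positivity
  have hfsum : ∀ s : Finset (Fin d → ℕ), ∑ α ∈ s, f α ^ 2 ≤ ∑' α, ‖a α‖ ^ 2 * c α := by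
    intro s
    simp_rw [hf2]
    exact Summable.sum_le_tsum s (fun α _ => by positivity) ha
  have key : ∀ s : Finset (Fin d → ℕ), ∑ α ∈ s, ‖a α * ∏ i, w i ^ α i‖ ≤
      Real.sqrt (∑' α, ‖a α‖ ^ 2 * c α) / Real.sqrt (1 - ‖w‖ ^ 2) := by
    intro s
    calc ∑ α ∈ s, ‖a α * ∏ i, w i ^ α i‖ = ∑ α ∈ s, f α * g α :=
          Finset.sum_congr rfl fun α _ => hfg α
      _ ≤ Real.sqrt ((∑ α ∈ s, f α ^ 2) * ∑ α ∈ s, g α ^ 2) := by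
          rw [Real.le_sqrt (Finset.sum_nonneg fun α _ => mul_nonneg (hfnn α) (hgnn α))]
          · exact Finset.sum_mul_sq_le_sq_mul_sq s f g
          · exact mul_nonneg (Finset.sum_nonneg fun α _ => sq_nonneg _)
              (Finset.sum_nonneg fun α _ => sq_nonneg _)
      _ ≤ Real.sqrt ((∑' α, ‖a α‖ ^ 2 * c α) * (1 - ‖w‖ ^ 2)⁻¹) := by
          refine Real.sqrt_le_sqrt (mul_le_mul (hfsum s) (hgsum s)
            (Finset.sum_nonneg fun α _ => sq_nonneg _) hAnn)
      _ = Real.sqrt (∑' α, ‖a α‖ ^ 2 * c α) / Real.sqrt (1 - ‖w‖ ^ 2) := by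
          rw [Real.sqrt_mul hAnn, Real.sqrt_inv, div_eq_mul_inv]
  have hsummable : Summable (fun α : Fin d → ℕ => ‖a α * ∏ i, w i ^ α i‖) :=
    summable_of_sum_le (fun α => norm_nonneg _) key
  exact ⟨hsummable, Summable.tsum_le_of_sum_le hsummable key⟩
end

section
/- Kaluza's lemma: let (a_n)_{n≥0} be a sequence of positive reals with a_0 = 1 that is log-convex (a_n² ≤ a_{n−1} a_{n+1} for n ≥ 1). If f(x) = ∑_{n≥0} a_n x^n and 1 − 1/f(x) = ∑_{n≥1} c_n x^n as formal power series, then c_n ≥ 0 for all n ≥ 1. -/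
/-- Kaluza's lemma: if `(a_n)` is a log-convex sequence of positive reals with `a_0 = 1`,
and `f = ∑ a_n x^n`, then the coefficients of `1 - 1/f` of degree `n ≥ 1` are nonnegative. -/
theorem stmt_12 (a : ℕ → ℝ) (h0 : a 0 = 1) (hpos : ∀ n, 0 < a n)
    (hlog : ∀ n, 1 ≤ n → (a n) ^ 2 ≤ a (n - 1) * a (n + 1)) :
    ∀ n, 1 ≤ n → 0 ≤ PowerSeries.coeff n (1 - (PowerSeries.mk a)⁻¹) := by
  set f := PowerSeries.mk a with hf
  have hconst : PowerSeries.constantCoeff f ≠ 0 := by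
    simp [hf, h0]
  set c : ℕ → ℝ := fun n => PowerSeries.coeff n (1 - f⁻¹) with hc
  have hc0 : c 0 = 0 := by
    simp [hc, PowerSeries.coeff_zero_eq_constantCoeff, PowerSeries.constantCoeff_inv,
      hf, h0]
  -- ratio monotonicity
  have hratio : ∀ m n : ℕ, m ≤ n → a (m + 1) * a n ≤ a m * a (n + 1) := by
    intro m n hmn
    induction n, hmn using Nat.le_induction with
    | base => exact le_of_eq (mul_comm _ _)
    | succ n hmn ih =>
      have hl := hlog (n + 1) (by omega)
      simp only [Nat.add_sub_cancel] at hl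
      have h1 : a (m + 1) * a n * a (n + 1) ≤ a m * a (n + 1) * a (n + 1) :=
        mul_le_mul_of_nonneg_right ih (hpos (n + 1)).le
      have h2 : a (m + 1) * (a (n + 1) ^ 2) ≤ a (m + 1) * (a n * a (n + 2)) :=
        mul_le_mul_of_nonneg_left hl (hpos (m + 1)).le
      have hn1 := hpos (n + 1)
      have hn := hpos n
      nlinarith [hpos m, hpos (m + 1), hpos (n + 2)]
  -- key identity
  have hkey : ∀ n, 1 ≤ n → a n = ∑ k ∈ Finset.range n, a k * c (n - k) := by
    intro n hn
    have h1 : f * (1 - f⁻¹) = f - 1 := by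
      rw [mul_sub, mul_one, PowerSeries.mul_inv_cancel _ hconst]
    have h2 := congrArg (PowerSeries.coeff n) h1
    rw [PowerSeries.coeff_mul, Finset.Nat.sum_antidiagonal_eq_sum_range_succ_mk] at h2
    have hne : n ≠ 0 := by omega
    have hrhs : PowerSeries.coeff n (f - 1) = a n := by
      simp [hf, hne]
    rw [hrhs, Finset.sum_range_succ] at h2
    have hlast : PowerSeries.coeff n f * PowerSeries.coeff (n - n) (1 - f⁻¹) = 0 := by
      rw [Nat.sub_self, show PowerSeries.coeff 0 (1 - f⁻¹) = c 0 from rfl, hc0, mul_zero]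
    rw [hlast, add_zero] at h2
    rw [← h2]
    refine Finset.sum_congr rfl fun k _ => ?_
    rw [hf, PowerSeries.coeff_mk]
  -- main induction
  have main : ∀ n, 1 ≤ n → 0 ≤ c n := by
    intro n
    induction n using Nat.strong_induction_on with
    | _ n ih =>
      intro hn
      obtain ⟨m, rfl⟩ : ∃ m, n = m + 1 := ⟨n - 1, by omega⟩
      have hcm : c (m + 1) = a (m + 1) - ∑ k ∈ Finset.range m, a (k + 1) * c (m - k) := by
        have h := hkey (m + 1) (by omega)
        rw [Finset.sum_range_succ'] at h
        simp only [h0, one_mul, Nat.sub_zero] at h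
        have hshift : ∀ k ∈ Finset.range m, a (k + 1) * c (m + 1 - (k + 1)) = a (k + 1) * c (m - k) := by
          intro k hk
          congr 2
          omega
        rw [Finset.sum_congr rfl hshift] at h
        linarith
      rcases Nat.eq_zero_or_pos m with rfl | hm
      · simp only [Finset.range_zero, Finset.sum_empty, sub_zero] at hcm
        rw [hcm]; exact (hpos 1).le
      · have ham := hkey m hm
        have hle : ∀ k ∈ Finset.range m,
            a m * (a (k + 1) * c (m - k)) ≤ a (m + 1) * (a k * c (m - k)) := by
          intro k hk
          rw [Finset.mem_range] at hk
          have hck : 0 ≤ c (m - k) := ih (m - k) (by omega) (by omega)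
          have hr := hratio k m (by omega)
          have := mul_le_mul_of_nonneg_right hr hck
          linear_combination this
        have hsum := Finset.sum_le_sum hle
        rw [← Finset.mul_sum, ← Finset.mul_sum, ← ham] at hsum
        have hS : ∑ k ∈ Finset.range m, a (k + 1) * c (m - k) ≤ a (m + 1) := by
          have hmpos := hpos m
          nlinarith [hsum]
        rw [hcm]
        linarith
  exact main
end

section
/- Let U = [[A, B],[C, D]] : E ⊕ ℂ → E^d ⊕ ℂ be a unitary operator (E a Hilbert space), and for z in the open unit ball of ℂ^d let Z(z): E^d → E be the row operator (v_1,…,v_d) ↦ ∑ z_i v_i. Then ‖Z(z)A‖ < 1, so I_E − Z(z)A is invertible, and the function φ(z) = D + C (I_E − Z(z)A)^{−1} Z(z) B satisfies, for all z, w in the ball, 1 − φ(z) conj(φ(w)) = (1 − ⟨z,w⟩) ⟨h(w), h(z)⟩_E where h(z) = (I_E − A* Z(z)*)^{−1} C*. In particular |φ(z)| ≤ 1 for all z in the ball. -/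
open scoped InnerProductSpace ComplexConjugate
open ContinuousLinearMap

set_option maxHeartbeats 1000000
set_option synthInstance.maxHeartbeats 1000000

section Stmt16Aux

variable {E : Type*} [NormedAddCommGroup E] [InnerProductSpace ℂ E] [CompleteSpace E] {d : ℕ}

instance stmt16_completeSpace : CompleteSpace (PiLp 2 fun _ : Fin d => E) :=
  inferInstance

private lemma stmt16_A_contract
    (A : E →L[ℂ] PiLp 2 (fun _ : Fin d => E)) (B : ℂ →L[ℂ] PiLp 2 (fun _ : Fin d => E))
    (C : E →L[ℂ] ℂ) (D : ℂ →L[ℂ] ℂ)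
    (U : WithLp 2 (E × ℂ) ≃ₗᵢ[ℂ] WithLp 2 ((PiLp 2 fun _ : Fin d => E) × ℂ))
    (hU : ∀ (x : E) (c : ℂ),
      U ((WithLp.equiv 2 (E × ℂ)).symm (x, c)) =
        (WithLp.equiv 2 ((PiLp 2 fun _ : Fin d => E) × ℂ)).symm (A x + B c, C x + D c))
    (x : E) : ‖A x‖ ≤ ‖x‖ := by
  have h2 : ‖U ((WithLp.equiv 2 (E × ℂ)).symm (x, 0))‖ ^ 2
      = ‖(WithLp.equiv 2 (E × ℂ)).symm (x, 0)‖ ^ 2 := by rw [U.norm_map]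
  rw [hU x 0] at h2
  rw [WithLp.prod_norm_sq_eq_of_L2, WithLp.prod_norm_sq_eq_of_L2] at h2
  simp only [WithLp.equiv_symm_apply, WithLp.toLp_fst, WithLp.toLp_snd, map_zero, add_zero, norm_zero] at h2
  nlinarith [norm_nonneg (A x), norm_nonneg x, sq_nonneg (‖C x‖)]

private lemma stmt16_zA_norm_lt
    (A : E →L[ℂ] PiLp 2 (fun _ : Fin d => E))
    (hA : ∀ x, ‖A x‖ ≤ ‖x‖)
    (Z : (Fin d → ℂ) → (PiLp 2 (fun _ : Fin d => E)) →L[ℂ] E)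
    (hZ : ∀ (z : Fin d → ℂ) (v : PiLp 2 fun _ : Fin d => E), Z z v = ∑ i, z i • v i)
    (z : Fin d → ℂ) (hz : (∑ i, ‖z i‖ ^ 2) < 1) :
    ‖(Z z).comp A‖ < 1 := by
  have hs0 : (0:ℝ) ≤ ∑ i, ‖z i‖ ^ 2 := Finset.sum_nonneg fun i _ => sq_nonneg _
  have hsq : Real.sqrt (∑ i, ‖z i‖ ^ 2) < 1 := by
    rw [show (1:ℝ) = Real.sqrt 1 by simp]
    exact Real.sqrt_lt_sqrt hs0 (by simpa using hz)
  refine lt_of_le_of_lt (opNorm_le_bound _ (Real.sqrt_nonneg _) fun x => ?_) hsq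
  rw [comp_apply, hZ]
  have cs : (∑ i, ‖z i‖ * ‖(A x) i‖)
      ≤ Real.sqrt (∑ i, ‖z i‖ ^ 2) * Real.sqrt (∑ i, ‖(A x) i‖ ^ 2) := by
    have h2 := Finset.sum_mul_sq_le_sq_mul_sq Finset.univ (fun i => ‖z i‖) (fun i => ‖(A x) i‖)
    have h3 := Real.sqrt_le_sqrt h2
    rwa [Real.sqrt_sq (Finset.sum_nonneg fun i _ => mul_nonneg (norm_nonneg _) (norm_nonneg _)),
      Real.sqrt_mul (Finset.sum_nonneg fun i _ => sq_nonneg _)] at h3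
  calc ‖∑ i, z i • (A x) i‖ ≤ ∑ i, ‖z i‖ * ‖(A x) i‖ := by
        refine (norm_sum_le _ _).trans ?_
        refine Finset.sum_le_sum fun i _ => ?_
        rw [norm_smul]
    _ ≤ Real.sqrt (∑ i, ‖z i‖ ^ 2) * Real.sqrt (∑ i, ‖(A x) i‖ ^ 2) := cs
    _ ≤ Real.sqrt (∑ i, ‖z i‖ ^ 2) * ‖x‖ := by
        have hb : Real.sqrt (∑ i, ‖(A x) i‖ ^ 2) ≤ ‖x‖ := by
          rw [← PiLp.norm_eq_of_L2]; exact hA x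
        exact mul_le_mul_of_nonneg_left hb (Real.sqrt_nonneg _)

private lemma stmt16_Z_adj
    (Z : (Fin d → ℂ) → (PiLp 2 (fun _ : Fin d => E)) →L[ℂ] E)
    (hZ : ∀ (z : Fin d → ℂ) (v : PiLp 2 fun _ : Fin d => E), Z z v = ∑ i, z i • v i)
    (z : Fin d → ℂ) (x : E) :
    adjoint (Z z) x = (WithLp.equiv 2 (∀ _ : Fin d, E)).symm fun i => conj (z i) • x := by
  apply ext_inner_right ℂ
  intro v
  rw [adjoint_inner_left, hZ, inner_sum, PiLp.inner_apply]
  refine Finset.sum_congr rfl fun i _ => ?_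
  rw [WithLp.equiv_symm_apply, PiLp.toLp_apply, inner_smul_right, inner_smul_left]
  simp

private lemma stmt16_Usymm
    (A : E →L[ℂ] PiLp 2 (fun _ : Fin d => E)) (B : ℂ →L[ℂ] PiLp 2 (fun _ : Fin d => E))
    (C : E →L[ℂ] ℂ) (D : ℂ →L[ℂ] ℂ)
    (U : WithLp 2 (E × ℂ) ≃ₗᵢ[ℂ] WithLp 2 ((PiLp 2 fun _ : Fin d => E) × ℂ))
    (hU : ∀ (x : E) (c : ℂ),
      U ((WithLp.equiv 2 (E × ℂ)).symm (x, c)) =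
        (WithLp.equiv 2 ((PiLp 2 fun _ : Fin d => E) × ℂ)).symm (A x + B c, C x + D c))
    (u : PiLp 2 fun _ : Fin d => E) (s : ℂ) :
    U.symm ((WithLp.equiv 2 ((PiLp 2 fun _ : Fin d => E) × ℂ)).symm (u, s)) =
      (WithLp.equiv 2 (E × ℂ)).symm (adjoint A u + adjoint C s, adjoint B u + adjoint D s) := by
  apply ext_inner_right ℂ
  intro p
  have key : ⟪U.symm ((WithLp.equiv 2 ((PiLp 2 fun _ : Fin d => E) × ℂ)).symm (u, s)), p⟫_ℂ
      = ⟪(WithLp.equiv 2 ((PiLp 2 fun _ : Fin d => E) × ℂ)).symm (u, s), U p⟫_ℂ := by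
    rw [← U.inner_map_map, U.apply_symm_apply]
  have hUp : U p = (WithLp.equiv 2 ((PiLp 2 fun _ : Fin d => E) × ℂ)).symm
      (A p.fst + B p.snd, C p.fst + D p.snd) := hU p.fst p.snd
  rw [key, hUp, WithLp.prod_inner_apply, WithLp.prod_inner_apply]
  simp only [WithLp.equiv_symm_apply, WithLp.toLp_fst, WithLp.toLp_snd]
  rw [inner_add_right, inner_add_right, inner_add_left, inner_add_left,
    adjoint_inner_left, adjoint_inner_left, adjoint_inner_left, adjoint_inner_left]
  simp only [WithLp.ofLp_fst, WithLp.ofLp_snd]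
  ring

private lemma stmt16_point
    (A : E →L[ℂ] PiLp 2 (fun _ : Fin d => E)) (B : ℂ →L[ℂ] PiLp 2 (fun _ : Fin d => E))
    (C : E →L[ℂ] ℂ) (D : ℂ →L[ℂ] ℂ)
    (Z : (Fin d → ℂ) → (PiLp 2 (fun _ : Fin d => E)) →L[ℂ] E)
    (hZ : ∀ (z : Fin d → ℂ) (v : PiLp 2 fun _ : Fin d => E), Z z v = ∑ i, z i • v i)
    (φ : (Fin d → ℂ) → ℂ)
    (hφ : ∀ z : Fin d → ℂ,
      φ z = D 1 + C (Ring.inverse (1 - (Z z).comp A) (Z z (B 1))))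
    (h : (Fin d → ℂ) → E)
    (hh : ∀ z : Fin d → ℂ,
      h z = Ring.inverse (1 - ContinuousLinearMap.adjoint ((Z z).comp A))
        (ContinuousLinearMap.adjoint C 1))
    (z : Fin d → ℂ) (hz1 : ‖(Z z).comp A‖ < 1) :
    (adjoint A ((WithLp.equiv 2 (∀ _ : Fin d, E)).symm fun i => conj (z i) • h z)
        + adjoint C 1 = h z) ∧
    (adjoint B ((WithLp.equiv 2 (∀ _ : Fin d, E)).symm fun i => conj (z i) • h z)
        + adjoint D 1 = conj (φ z)) := by
  set X := (Z z).comp A with hX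
  set T := adjoint X with hT
  have hTu : IsUnit (1 - T) := by
    refine isUnit_one_sub_of_norm_lt_one ?_
    rw [hT]
    calc ‖adjoint X‖ = ‖X‖ := ContinuousLinearMap.adjoint.norm_map X
      _ < 1 := hz1
  have hXu : IsUnit (1 - X) := isUnit_one_sub_of_norm_lt_one hz1
  have hhz : (1 - T) (h z) = adjoint C 1 := by
    rw [hh]
    calc (1 - T) (Ring.inverse (1 - T) (adjoint C 1))
        = ((1 - T) * Ring.inverse (1 - T)) (adjoint C 1) := rfl
      _ = adjoint C 1 := by rw [Ring.mul_inverse_cancel _ hTu, ContinuousLinearMap.one_apply]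
  have hThz : T (h z) = adjoint A ((WithLp.equiv 2 (∀ _ : Fin d, E)).symm
      fun i => conj (z i) • h z) := by
    rw [hT, hX, adjoint_comp, comp_apply, stmt16_Z_adj Z hZ]
  have hpart1 : adjoint A ((WithLp.equiv 2 (∀ _ : Fin d, E)).symm fun i => conj (z i) • h z)
      + adjoint C 1 = h z := by
    rw [← hThz, ← hhz]
    simp [sub_apply]
  set a := Ring.inverse (1 - X) (Z z (B 1)) with ha
  have haz : (1 - X) a = Z z (B 1) := by
    rw [ha]
    calc (1 - X) (Ring.inverse (1 - X) (Z z (B 1)))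
        = ((1 - X) * Ring.inverse (1 - X)) (Z z (B 1)) := rfl
      _ = Z z (B 1) := by rw [Ring.mul_inverse_cancel _ hXu, ContinuousLinearMap.one_apply]
  have e1 : adjoint B ((WithLp.equiv 2 (∀ _ : Fin d, E)).symm fun i => conj (z i) • h z)
      = ⟪Z z (B 1), h z⟫_ℂ := by
    have e0 : adjoint B ((WithLp.equiv 2 (∀ _ : Fin d, E)).symm fun i => conj (z i) • h z)
        = ⟪(B 1 : PiLp 2 fun _ : Fin d => E),
            (WithLp.equiv 2 (∀ _ : Fin d, E)).symm fun i => conj (z i) • h z⟫_ℂ := by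
      rw [← adjoint_inner_right]
      rw [RCLike.inner_apply]
      simp
    rw [e0, PiLp.inner_apply, hZ, sum_inner]
    refine Finset.sum_congr rfl fun i _ => ?_
    rw [WithLp.equiv_symm_apply, PiLp.toLp_apply, inner_smul_right, inner_smul_left]
  have e2 : ⟪Z z (B 1), h z⟫_ℂ = conj (C a) := by
    have h5 : ⟪a, (adjoint C) 1⟫_ℂ = conj (C a) := by
      rw [adjoint_inner_right, RCLike.inner_apply, one_mul]
    have h6 : ((1 - T) (h z) : E) = h z - T (h z) := by simp [sub_apply]
    calc ⟪Z z (B 1), h z⟫_ℂ = ⟪(1 - X) a, h z⟫_ℂ := by rw [haz]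
      _ = ⟪a, h z⟫_ℂ - ⟪X a, h z⟫_ℂ := by
          rw [show ((1 - X) a : E) = a - X a by simp [sub_apply], inner_sub_left]
      _ = ⟪a, h z⟫_ℂ - ⟪a, T (h z)⟫_ℂ := by rw [hT, adjoint_inner_right]
      _ = ⟪a, (1 - T) (h z)⟫_ℂ := by rw [h6, inner_sub_right]
      _ = conj (C a) := by rw [hhz, h5]
  have e3 : (adjoint D 1 : ℂ) = conj (D 1) := by
    have : ⟪(1:ℂ), adjoint D 1⟫_ℂ = ⟪D 1, (1:ℂ)⟫_ℂ := adjoint_inner_right D 1 1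
    rw [RCLike.inner_apply, RCLike.inner_apply] at this
    simpa using this
  refine ⟨hpart1, ?_⟩
  rw [e1, e2, e3, hφ z, ← hX, ← ha, map_add]
  ring

private lemma stmt16_key
    (A : E →L[ℂ] PiLp 2 (fun _ : Fin d => E)) (B : ℂ →L[ℂ] PiLp 2 (fun _ : Fin d => E))
    (C : E →L[ℂ] ℂ) (D : ℂ →L[ℂ] ℂ)
    (U : WithLp 2 (E × ℂ) ≃ₗᵢ[ℂ] WithLp 2 ((PiLp 2 fun _ : Fin d => E) × ℂ))
    (hU : ∀ (x : E) (c : ℂ),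
      U ((WithLp.equiv 2 (E × ℂ)).symm (x, c)) =
        (WithLp.equiv 2 ((PiLp 2 fun _ : Fin d => E) × ℂ)).symm (A x + B c, C x + D c))
    (Z : (Fin d → ℂ) → (PiLp 2 (fun _ : Fin d => E)) →L[ℂ] E)
    (hZ : ∀ (z : Fin d → ℂ) (v : PiLp 2 fun _ : Fin d => E), Z z v = ∑ i, z i • v i)
    (φ : (Fin d → ℂ) → ℂ)
    (hφ : ∀ z : Fin d → ℂ,
      φ z = D 1 + C (Ring.inverse (1 - (Z z).comp A) (Z z (B 1))))
    (h : (Fin d → ℂ) → E)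
    (hh : ∀ z : Fin d → ℂ,
      h z = Ring.inverse (1 - ContinuousLinearMap.adjoint ((Z z).comp A))
        (ContinuousLinearMap.adjoint C 1))
    (z : Fin d → ℂ) (hz1 : ‖(Z z).comp A‖ < 1)
    (w : Fin d → ℂ) (hw1 : ‖(Z w).comp A‖ < 1) :
    1 - φ z * conj (φ w) = (1 - ∑ i, z i * conj (w i)) * ⟪h z, h w⟫_ℂ := by
  obtain ⟨hz_eq, hz_psi⟩ := stmt16_point A B C D Z hZ φ hφ h hh z hz1
  obtain ⟨hw_eq, hw_psi⟩ := stmt16_point A B C D Z hZ φ hφ h hh w hw1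
  set kz := ((WithLp.equiv 2 (∀ _ : Fin d, E)).symm fun i => conj (z i) • h z) with hkz
  set kw := ((WithLp.equiv 2 (∀ _ : Fin d, E)).symm fun i => conj (w i) • h w) with hkw
  have main : ⟪U.symm ((WithLp.equiv 2 ((PiLp 2 fun _ : Fin d => E) × ℂ)).symm (kz, 1)),
        U.symm ((WithLp.equiv 2 ((PiLp 2 fun _ : Fin d => E) × ℂ)).symm (kw, 1))⟫_ℂ
      = ⟪(WithLp.equiv 2 ((PiLp 2 fun _ : Fin d => E) × ℂ)).symm (kz, 1),
        (WithLp.equiv 2 ((PiLp 2 fun _ : Fin d => E) × ℂ)).symm (kw, 1)⟫_ℂ :=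
    U.symm.inner_map_map _ _
  rw [stmt16_Usymm A B C D U hU, stmt16_Usymm A B C D U hU,
    WithLp.prod_inner_apply, WithLp.prod_inner_apply] at main
  simp only [WithLp.equiv_symm_apply, WithLp.toLp_fst, WithLp.toLp_snd] at main
  rw [hz_eq, hw_eq, hz_psi, hw_psi] at main
  have ekk : ⟪kz, kw⟫_ℂ = (∑ i, z i * conj (w i)) * ⟪h z, h w⟫_ℂ := by
    rw [hkz, hkw, PiLp.inner_apply, Finset.sum_mul]
    refine Finset.sum_congr rfl fun i _ => ?_
    rw [WithLp.equiv_symm_apply, PiLp.toLp_apply, PiLp.toLp_apply,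
      inner_smul_left, inner_smul_right]
    simp only [Complex.conj_conj]
    ring
  rw [ekk] at main
  simp only [RCLike.inner_apply, Complex.conj_conj, map_one, one_mul, mul_one] at main
  linear_combination -main

end Stmt16Aux

/-- The realization/transfer-function identity: if `U = [[A,B],[C,D]] : E ⊕ ℂ → E^d ⊕ ℂ`
is unitary, `Z(z)` is the row operator `(v_1,…,v_d) ↦ ∑ z_i v_i`, then for `z` in the open
unit ball of `ℂ^d` we have `‖Z(z)A‖ < 1`, `I - Z(z)A` is invertible, and
`φ(z) = D + C (I - Z(z)A)⁻¹ Z(z) B` satisfies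
`1 - φ(z) conj(φ(w)) = (1 - ⟨z,w⟩) ⟨h(w),h(z)⟩` with `h(z) = (I - A* Z(z)*)⁻¹ C*`;
in particular `|φ(z)| ≤ 1`. -/
theorem stmt_16 {E : Type*} [NormedAddCommGroup E] [InnerProductSpace ℂ E] [CompleteSpace E]
    (d : ℕ)
    (A : E →L[ℂ] PiLp 2 (fun _ : Fin d => E)) (B : ℂ →L[ℂ] PiLp 2 (fun _ : Fin d => E))
    (C : E →L[ℂ] ℂ) (D : ℂ →L[ℂ] ℂ)
    (U : WithLp 2 (E × ℂ) ≃ₗᵢ[ℂ] WithLp 2 ((PiLp 2 fun _ : Fin d => E) × ℂ))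
    (hU : ∀ (x : E) (c : ℂ),
      U ((WithLp.equiv 2 (E × ℂ)).symm (x, c)) =
        (WithLp.equiv 2 ((PiLp 2 fun _ : Fin d => E) × ℂ)).symm (A x + B c, C x + D c))
    (Z : (Fin d → ℂ) → (PiLp 2 (fun _ : Fin d => E)) →L[ℂ] E)
    (hZ : ∀ (z : Fin d → ℂ) (v : PiLp 2 fun _ : Fin d => E), Z z v = ∑ i, z i • v i)
    (φ : (Fin d → ℂ) → ℂ)
    (hφ : ∀ z : Fin d → ℂ,
      φ z = D 1 + C (Ring.inverse (1 - (Z z).comp A) (Z z (B 1))))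
    (h : (Fin d → ℂ) → E)
    (hh : ∀ z : Fin d → ℂ,
      h z = Ring.inverse (1 - ContinuousLinearMap.adjoint ((Z z).comp A))
        (ContinuousLinearMap.adjoint C 1)) :
    ∀ z : Fin d → ℂ, (∑ i, ‖z i‖ ^ 2) < 1 →
      ‖(Z z).comp A‖ < 1 ∧ IsUnit (1 - (Z z).comp A) ∧ ‖φ z‖ ≤ 1 ∧
      ∀ w : Fin d → ℂ, (∑ i, ‖w i‖ ^ 2) < 1 →
        1 - φ z * conj (φ w) =
          (1 - ∑ i, z i * conj (w i)) * ⟪h z, h w⟫_ℂ := by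
  have hA : ∀ x : E, ‖A x‖ ≤ ‖x‖ := stmt16_A_contract A B C D U hU
  intro z hz
  have hz1 : ‖(Z z).comp A‖ < 1 := stmt16_zA_norm_lt A hA Z hZ z hz
  refine ⟨hz1, isUnit_one_sub_of_norm_lt_one hz1, ?_,
    fun w hw => stmt16_key A B C D U hU Z hZ φ hφ h hh z hz1 w
      (stmt16_zA_norm_lt A hA Z hZ w hw)⟩
  have hid := stmt16_key A B C D U hU Z hZ φ hφ h hh z hz1 z hz1
  simp only [RCLike.mul_conj, inner_self_eq_norm_sq_to_K] at hid
  have hre : (1 - ‖φ z‖ ^ 2 : ℝ) = (1 - ∑ i, ‖z i‖ ^ 2) * ‖h z‖ ^ 2 := by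
    refine Complex.ofReal_inj.mp ?_
    push_cast
    exact hid
  nlinarith [sq_nonneg (‖φ z‖ - 1), sq_nonneg (‖h z‖),
    mul_nonneg (sub_nonneg.2 hz.le) (sq_nonneg ‖h z‖)]
end

section
/- Let H be a Hilbert space and let (x_n) be a sequence of unit vectors in H tending to 0 weakly. Then (x_n) has a subsequence that is a Riesz sequence: there exist constants C_1, C_2 > 0 and a subsequence (x_{n_k}) with C_1 ∑|α_k|² ≤ ‖∑ α_k x_{n_k}‖² ≤ C_2 ∑|α_k|² for all finitely supported scalar sequences (α_k). -/
open scoped InnerProductSpace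


theorem key {H : Type*} [NormedAddCommGroup H] [InnerProductSpace ℂ H]
    (x : ℕ → H)
    (hweak : ∀ y : H, Filter.Tendsto (fun n => ⟪x n, y⟫_ℂ) Filter.atTop (nhds 0))
    (N : ℕ) (δ : ℝ) (hδ : 0 < δ) :
    ∃ m, N < m ∧ ∀ p ≤ N, ‖⟪x p, x m⟫_ℂ‖ ≤ δ := by
  have h : ∀ᶠ m in Filter.atTop, ∀ p ∈ Finset.range (N+1), ‖⟪x p, x m⟫_ℂ‖ ≤ δ := by
    rw [Filter.eventually_all_finset]
    intro p _
    have := (hweak (x p)).norm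
    simp only [norm_zero] at this
    have h2 := this.eventually_le_const hδ
    refine h2.mono fun m hm => ?_
    rw [← norm_inner_symm]
    exact hm
  obtain ⟨m, hm, hm2⟩ := (h.and (Filter.eventually_ge_atTop (N+1))).exists
  exact ⟨m, hm2, fun p hp => hm p (Finset.mem_range.mpr (Nat.lt_succ_of_le hp))⟩


theorem est {H : Type*} [NormedAddCommGroup H] [InnerProductSpace ℂ H]
    (y : ℕ → H) (hunit : ∀ k, ‖y k‖ = 1)
    (hsmall : ∀ j k, j ≠ k → ‖⟪y j, y k⟫_ℂ‖ ≤ (1/4) * (1/2)^j * (1/2)^k)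
    (s : Finset ℕ) (α : ℕ → ℂ) :
    (2/3 : ℝ) * ∑ k ∈ s, ‖α k‖ ^ 2 ≤ ‖∑ k ∈ s, α k • y k‖ ^ 2 ∧
    ‖∑ k ∈ s, α k • y k‖ ^ 2 ≤ (4/3 : ℝ) * ∑ k ∈ s, ‖α k‖ ^ 2 := by
  set S := ∑ k ∈ s, α k • y k with hSdef
  set Q : ℝ := ∑ k ∈ s, ‖α k‖ ^ 2 with hQdef
  set T : ℂ := ∑ j ∈ s, ∑ k ∈ s.erase j, (starRingEnd ℂ) (α j) * α k * ⟪y j, y k⟫_ℂ with hTdef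
  have hexp : (‖S‖ ^ 2 : ℂ) = (Q : ℂ) + T := by
    have h1 : ((‖S‖:ℂ) ^ 2 : ℂ) = ⟪S, S⟫_ℂ := (inner_self_eq_norm_sq_to_K S).symm
    rw [h1, hSdef, sum_inner]
    simp_rw [inner_sum, inner_smul_left, inner_smul_right]
    rw [hQdef, hTdef, Complex.ofReal_sum, ← Finset.sum_add_distrib]
    refine Finset.sum_congr rfl fun j hj => ?_
    rw [← Finset.add_sum_erase _ _ hj]
    congr 1
    · rw [inner_self_eq_norm_sq_to_K, hunit j]
      push_cast
      rw [one_pow, mul_one, RCLike.conj_mul]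
      norm_cast
    · refine Finset.sum_congr rfl fun k hk => ?_
      ring
  have hTbound : ‖T‖ ≤ (1/3) * Q := by
    have h2 : ‖T‖ ≤ ∑ j ∈ s, ∑ k ∈ s.erase j, ‖α j‖ * ‖α k‖ * ((1/4) * (1/2)^j * (1/2)^k) := by
      refine (norm_sum_le _ _).trans (Finset.sum_le_sum fun j hj => ?_)
      refine (norm_sum_le _ _).trans (Finset.sum_le_sum fun k hk => ?_)
      rw [norm_mul, norm_mul, RCLike.norm_conj]
      exact mul_le_mul_of_nonneg_left (hsmall j k (Finset.ne_of_mem_erase hk).symm)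
        (by positivity)
    set P : ℝ := ∑ k ∈ s, ‖α k‖ * (1/2)^k with hPdef
    have h3 : ∑ j ∈ s, ∑ k ∈ s.erase j, ‖α j‖ * ‖α k‖ * ((1/4) * (1/2)^j * (1/2)^k)
        ≤ (1/4) * (P * P) := by
      have hsub : ∑ j ∈ s, ∑ k ∈ s.erase j, ‖α j‖ * ‖α k‖ * ((1/4) * (1/2)^j * (1/2)^k)
          ≤ ∑ j ∈ s, ∑ k ∈ s, ‖α j‖ * ‖α k‖ * ((1/4) * (1/2)^j * (1/2)^k) := by
        refine Finset.sum_le_sum fun j hj => ?_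
        refine Finset.sum_le_sum_of_subset_of_nonneg (Finset.erase_subset j s)
          fun k _ _ => by positivity
      refine hsub.trans ?_
      rw [hPdef, Finset.sum_mul_sum, Finset.mul_sum]
      refine le_of_eq (Finset.sum_congr rfl fun j hj => ?_)
      rw [Finset.mul_sum]
      exact Finset.sum_congr rfl fun k hk => by ring
    have h4 : P * P ≤ (∑ k ∈ s, ((1/2:ℝ)^k)^2) * Q := by
      calc P * P = (∑ k ∈ s, (1/2:ℝ)^k * ‖α k‖) ^ 2 := by
            rw [sq]; congr 1 <;> exact Finset.sum_congr rfl fun k _ => by ring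
        _ ≤ (∑ k ∈ s, ((1/2:ℝ)^k)^2) * ∑ k ∈ s, ‖α k‖^2 :=
            Finset.sum_mul_sq_le_sq_mul_sq s _ _
    have h5 : (∑ k ∈ s, ((1/2:ℝ)^k)^2) ≤ 4/3 := by
      have heq : ∀ k : ℕ, ((1/2:ℝ)^k)^2 = (1/4:ℝ)^k := by
        intro k; rw [← pow_mul, mul_comm, pow_mul]; norm_num
      simp_rw [heq]
      have hsum : Summable (fun k : ℕ => (1/4:ℝ)^k) :=
        summable_geometric_of_lt_one (by norm_num) (by norm_num)
      refine (Summable.sum_le_tsum s (fun k _ => by positivity) hsum).trans ?_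
      rw [tsum_geometric_of_lt_one (by norm_num) (by norm_num)]
      norm_num
    have hQ0 : 0 ≤ Q := Finset.sum_nonneg fun k _ => by positivity
    nlinarith
  have hexp' : ((‖S‖ ^ 2 : ℝ) : ℂ) = ↑Q + T := by push_cast; exact hexp
  have hre : ‖S‖ ^ 2 = Q + T.re := by
    have := congrArg Complex.re hexp'
    rwa [Complex.ofReal_re, Complex.add_re, Complex.ofReal_re] at this
  have habs : |T.re| ≤ ‖T‖ := Complex.abs_re_le_norm T
  rw [abs_le] at habs
  exact ⟨by linarith, by linarith⟩

/-- Every sequence of unit vectors tending to `0` weakly in a Hilbert space has a subsequence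
that is a Riesz sequence. -/
theorem stmt_17 {H : Type*} [NormedAddCommGroup H] [InnerProductSpace ℂ H] [CompleteSpace H]
    (x : ℕ → H) (hunit : ∀ n, ‖x n‖ = 1)
    (hweak : ∀ y : H, Filter.Tendsto (fun n => ⟪x n, y⟫_ℂ) Filter.atTop (nhds 0)) :
    ∃ (C₁ C₂ : ℝ) (n : ℕ → ℕ), 0 < C₁ ∧ 0 < C₂ ∧ StrictMono n ∧
      ∀ (s : Finset ℕ) (α : ℕ → ℂ),
        C₁ * ∑ k ∈ s, ‖α k‖ ^ 2 ≤ ‖∑ k ∈ s, α k • x (n k)‖ ^ 2 ∧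
        ‖∑ k ∈ s, α k • x (n k)‖ ^ 2 ≤ C₂ * ∑ k ∈ s, ‖α k‖ ^ 2 := by
  have hkey : ∀ (N k : ℕ), ∃ m, N < m ∧ ∀ p ≤ N,
      ‖⟪x p, x m⟫_ℂ‖ ≤ (1/4 : ℝ) * (1/2)^k * (1/2)^(k+1) :=
    fun N k => key x hweak N _ (by positivity)
  set n : ℕ → ℕ := fun k => Nat.rec 0 (fun k nk => (hkey nk k).choose) k with hn
  have hsucc : ∀ k, n (k+1) = (hkey (n k) k).choose := fun k => rfl
  have hlt : ∀ k, n k < n (k+1) := by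
    intro k; rw [hsucc k]; exact (hkey (n k) k).choose_spec.1
  have hmono : StrictMono n := strictMono_nat_of_lt_succ hlt
  have hprop : ∀ k p, p ≤ n k →
      ‖⟪x p, x (n (k+1))⟫_ℂ‖ ≤ (1/4 : ℝ) * (1/2)^k * (1/2)^(k+1) := by
    intro k p hp; rw [hsucc k]; exact (hkey (n k) k).choose_spec.2 p hp
  have hsmall' : ∀ j k, j < k →
      ‖⟪x (n j), x (n k)⟫_ℂ‖ ≤ (1/4 : ℝ) * (1/2)^j * (1/2)^k := by
    intro j k hjk
    obtain ⟨k', rfl⟩ : ∃ k', k = k' + 1 := ⟨k - 1, by omega⟩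
    have hj : j ≤ k' := by omega
    refine (hprop k' (n j) (hmono.monotone hj)).trans ?_
    have : ((1:ℝ)/2)^k' ≤ (1/2)^j :=
      pow_le_pow_of_le_one (by norm_num) (by norm_num) hj
    nlinarith [pow_pos (show (0:ℝ) < 1/2 by norm_num) (k'+1)]
  have hsmall : ∀ j k, j ≠ k →
      ‖⟪x (n j), x (n k)⟫_ℂ‖ ≤ (1/4 : ℝ) * (1/2)^j * (1/2)^k := by
    intro j k hjk
    rcases lt_or_gt_of_ne hjk with h | h
    · exact hsmall' j k h
    · rw [← norm_inner_symm]
      calc ‖⟪x (n k), x (n j)⟫_ℂ‖ ≤ (1/4 : ℝ) * (1/2)^k * (1/2)^j := hsmall' k j h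
        _ = (1/4 : ℝ) * (1/2)^j * (1/2)^k := by ring
  exact ⟨2/3, 4/3, n, by norm_num, by norm_num, hmono,
    fun s α => est (fun k => x (n k)) (fun k => hunit (n k)) hsmall s α⟩
end
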